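/- arXiv:1602.06940 — 2 statements merged into one kernel-verified Lean document; each statement's English description precedes it below -/
import Mathlib

section
/- In the two-agent manipulation setting, let k₁ be the number of occurrences of agent 1 in π and let S* be the greedy set (obtained by enumerating O as o₁ ≻₁ ⋯ ≻₁ o_m and adding o_j to the current set S whenever S ∪ {o_j} is achievable by agent 1). Then for EVERY additive utility u₁ consistent with ≻₁ and every achievable set B with |B| = k₁, u₁(S*) ≥ u₁(B); that is, S* simultaneously maximizes all additive utilities consistent with ≻₁ over achievable allocations. -/
/-- Sequential allocation: process the picking sequence in order; at each step the
agent whose turn it is receives his most-preferred (earliest in his ranking list)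
item among those not yet allocated. Returns each agent's allocation. -/
def seqAlloc {A I : Type*} [DecidableEq A] [DecidableEq I]
    (prefs : A → List I) : List A → Finset I → A → Finset I
  | [], _ => fun _ => ∅
  | a :: rest, rem =>
    match (prefs a).find? (fun o => decide (o ∈ rem)) with
    | none => seqAlloc prefs rest rem
    | some o => fun j =>
        if j = a then insert o (seqAlloc prefs rest (rem.erase o) j)
        else seqAlloc prefs rest (rem.erase o) j

/-- A report (strict linear order) over the item set `O`, given as a ranking list:
most preferred item first. -/
def IsReport {I : Type*} [DecidableEq I] (O : Finset I) (p : List I) : Prop :=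
  p.Nodup ∧ ∀ o, o ∈ p ↔ o ∈ O

/-- Two-agent sequential allocation: agent `0` ("agent 1") reports `p1`,
agent `1` ("agent 2") reports `p2`. -/
def alloc2 {I : Type*} [DecidableEq I] (p1 p2 : List I)
    (π : List (Fin 2)) (O : Finset I) : Fin 2 → Finset I :=
  seqAlloc (fun a => if a = 0 then p1 else p2) π O

/-- `S` is achievable by agent 1: some report gives agent 1 an allocation including `S`. -/
def Achievable {I : Type*} [DecidableEq I] (p2 : List I) (π : List (Fin 2))
    (O : Finset I) (S : Finset I) : Prop :=
  ∃ p1, IsReport O p1 ∧ S ⊆ alloc2 p1 p2 π O 0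

/-- `o` is strictly preferred to `o'` in the ranking list `p`. -/
def Prefers {I : Type*} [DecidableEq I] (p : List I) (o o' : I) : Prop :=
  p.idxOf o < p.idxOf o'

instance {I : Type*} [DecidableEq I] (p : List I) (o o' : I) : Decidable (Prefers p o o') :=
  inferInstanceAs (Decidable (_ < _))

/-- `u` is an additive utility consistent with the ranking `p` on item set `O`. -/
def Consistent {I : Type*} [DecidableEq I] (O : Finset I) (p : List I) (u : I → ℝ) : Prop :=
  (∀ o ∈ O, 0 < u o) ∧ ∀ o ∈ O, ∀ o' ∈ O, u o' < u o ↔ Prefers p o o'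

open Classical in
/-- Greedy construction of a set: go through the ranking list in order and add an
item whenever the resulting set stays in the given (achievability) predicate. -/
noncomputable def greedy {I : Type*} [DecidableEq I]
    (ach : Finset I → Prop) : List I → Finset I → Finset I
  | [], S => S
  | o :: rest, S =>
    if ach (insert o S) then greedy ach rest (insert o S) else greedy ach rest S

/-!
Agent 1 can secure a set `S` exactly when, for every `t`, at most as many items of `S` lie among
agent 2's `t` favourite items as agent 1 has turns among the first `t` steps: agent 1 grabs, at
each of his turns, the item of `S` that agent 2 wants most, and agent 2 then takes items outside
`S` in his own order. This Hall-type condition is closed under subsets and has the augmentation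
property of a matroid, so the greedy set `S*` contains, for every `n`, at least as many of agent 1's
`n + 1` favourite items as any achievable set. Matching the best items of `S*` and of an achievable
`B` one at a time turns this prefix dominance into `u(B) ≤ u(S*)` for every positive utility that
decreases along `≻₁`.
-/

section SequentialAllocation

open Finset

variable {I : Type*} [DecidableEq I]

section Greedy

variable (P : Finset I → Prop)

theorem subset_greedy (l : List I) (S : Finset I) : S ⊆ greedy P l S := by
  induction l generalizing S with
  | nil => rw [greedy]
  | cons o l ih =>
    rw [greedy]
    split_ifs
    · exact (subset_insert o S).trans (ih _)
    · exact ih S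

theorem greedy_spec {l : List I} {S : Finset I} (hS : P S) : P (greedy P l S) := by
  induction l generalizing S with
  | nil => rwa [greedy]
  | cons o l ih =>
    rw [greedy]
    split_ifs with h
    exacts [ih h, ih hS]

variable {P}

theorem not_insert_filter_greedy (hP : ∀ ⦃S T⦄, T ⊆ S → P S → P T) (ρ : I → ℕ) {l : List I}
    (hl : l.Pairwise (ρ · < ρ ·)) {S : Finset I} (hS : ∀ s ∈ S, ∀ x ∈ l, ρ s < ρ x) {x : I}
    (hx : x ∈ l) (hxG : x ∉ greedy P l S) :
    ¬ P (insert x ((greedy P l S).filter (ρ · < ρ x))) := by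
  induction l generalizing S with
  | nil => cases hx
  | cons o l ih =>
    obtain ⟨ho, hl⟩ := List.pairwise_cons.1 hl
    have hS' : ∀ s ∈ S, ∀ y ∈ l, ρ s < ρ y := fun s hs y hy => hS s hs y (List.mem_cons_of_mem o hy)
    rw [greedy] at hxG ⊢
    split_ifs at hxG ⊢ with h
    · rcases List.mem_cons.1 hx with rfl | hx
      · exact absurd (subset_greedy P l _ (mem_insert_self x S)) hxG
      · exact ih hl (fun s hs => (mem_insert.1 hs).elim (· ▸ ho) (hS' s)) hx hxG
    · rcases List.mem_cons.1 hx with rfl | hx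
      · refine fun hPx => h (hP (insert_subset_insert x fun s hs => ?_) hPx)
        exact mem_filter.2 ⟨subset_greedy P l S hs, hS s hs x List.mem_cons_self⟩
      · exact ih hl hS' hx hxG

theorem card_filter_le_card_filter_greedy (hP : ∀ ⦃S T⦄, T ⊆ S → P S → P T)
    (hP_exch : ∀ ⦃S T⦄, P S → P T → #S < #T → ∃ x ∈ T, x ∉ S ∧ P (insert x S))
    {l : List I} (hl : l.Nodup) {B : Finset I} (hB : P B) (hBl : ∀ b ∈ B, b ∈ l) (n : ℕ) :
    #(B.filter (l.idxOf · ≤ n)) ≤ #((greedy P l ∅).filter (l.idxOf · ≤ n)) := by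
  by_contra! hlt
  have hG : P (greedy P l ∅) := greedy_spec P (hP (empty_subset B) hB)
  obtain ⟨x, hxB, hxG, hPx⟩ := hP_exch (hP (filter_subset _ _) hG) (hP (filter_subset _ _) hB) hlt
  obtain ⟨hxB, hxn⟩ := mem_filter.1 hxB
  have hl' : l.Pairwise (l.idxOf · < l.idxOf ·) :=
    List.pairwise_iff_getElem.2 fun i j hi hj hij => by simpa [hl] using hij
  refine not_insert_filter_greedy hP _ hl' (by simp) (hBl x hxB)
    (fun h => hxG (mem_filter.2 ⟨h, hxn⟩)) (hP ?_ hPx)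
  exact insert_subset_insert x (monotone_filter_right _ fun y _ hy => hy.le.trans hxn)

end Greedy

theorem sum_le_sum_of_card_filter_le {ι M : Type*} [DecidableEq ι] [AddCommMonoid M]
    [PartialOrder M] [IsOrderedAddMonoid M] (ρ : ι → ℕ) {u : ι → M} {B G : Finset ι} (hG : ∀ g ∈ G, 0 ≤ u g)
    (hu : ∀ g ∈ G, ∀ b ∈ B, ρ g ≤ ρ b → u b ≤ u g)
    (h : ∀ n, #(B.filter (ρ · ≤ n)) ≤ #(G.filter (ρ · ≤ n))) :
    ∑ b ∈ B, u b ≤ ∑ g ∈ G, u g := by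
  induction B using Finset.strongInduction generalizing G with
  | H B ih =>
  obtain rfl | hBne := B.eq_empty_or_nonempty
  · simpa using sum_nonneg hG
  obtain ⟨b, hb, hb_min⟩ := B.exists_min_image ρ hBne
  obtain ⟨g', hg'⟩ : (G.filter (ρ · ≤ ρ b)).Nonempty :=
    card_pos.1 <|
      (card_pos.2 ⟨b, mem_filter.2 ⟨hb, le_rfl⟩⟩ : 0 < #(B.filter (ρ · ≤ ρ b))).trans_le (h _)
  obtain ⟨g, hg, hg_min⟩ := G.exists_min_image ρ ⟨g', (mem_filter.1 hg').1⟩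
  have hgb : ρ g ≤ ρ b := (hg_min g' (mem_filter.1 hg').1).trans (mem_filter.1 hg').2
  rw [← add_sum_erase B u hb, ← add_sum_erase G u hg]
  refine add_le_add (hu g hg b hb hgb) (ih _ (erase_ssubset hb)
    (fun x hx => hG x (mem_of_mem_erase hx))
    (fun x hx y hy => hu x (mem_of_mem_erase hx) y (mem_of_mem_erase hy)) fun n => ?_)
  rw [filter_erase, filter_erase]
  by_cases hn : ρ b ≤ n
  · rw [card_erase_of_mem (mem_filter.2 ⟨hb, hn⟩),
      card_erase_of_mem (mem_filter.2 ⟨hg, hgb.trans hn⟩)]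
    exact Nat.sub_le_sub_right (h n) 1
  · rw [filter_eq_empty_iff.2 fun y hy hyn => hn ((hb_min y hy).trans hyn)]
    simp

section Rank

variable {p : List I} {rem S : Finset I}

theorem idxOf_lt_idxOf_of_le {a s : I} (ha : a ∈ p) (hle : p.idxOf a ≤ p.idxOf s) (hne : s ≠ a) :
    p.idxOf a < p.idxOf s :=
  hle.lt_of_ne fun h => hne ((List.idxOf_inj ha).1 h).symm

theorem idxOf_le_of_find?_eq_some {g o : I} (hg : p.find? (fun x => decide (x ∈ rem)) = some g)
    (ho : o ∈ rem) : p.idxOf g ≤ p.idxOf o := by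
  obtain ⟨hgrem, as, bs, rfl, has⟩ := List.find?_eq_some_iff_append.1 hg
  have hnot : ∀ x ∈ rem, x ∉ as := fun x hx hxa => by simpa [hx] using has x hxa
  rw [List.idxOf_append, List.idxOf_append, if_neg (hnot o ho),
    if_neg (hnot g (by simpa using hgrem))]
  simp

theorem exists_find?_eq_some (hrem : ∀ x ∈ rem, x ∈ p) (hne : rem.Nonempty) :
    ∃ g, p.find? (fun x => decide (x ∈ rem)) = some g := by
  obtain ⟨x, hx⟩ := hne
  exact Option.isSome_iff_exists.1 (List.find?_isSome.2 ⟨x, hrem x hx, by simpa using hx⟩)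

def rankIn (p : List I) (rem : Finset I) (s : I) : ℕ :=
  #(rem.filter (p.idxOf · < p.idxOf s))

theorem rankIn_le_card (s : I) : rankIn p rem s ≤ #rem := card_filter_le _ _

theorem rankIn_lt_rankIn {s t : I} (hs : s ∈ rem) (h : p.idxOf s < p.idxOf t) :
    rankIn p rem s < rankIn p rem t :=
  card_lt_card <| (ssubset_iff_of_subset (monotone_filter_right _ fun _ _ hx => hx.trans h)).2
    ⟨s, mem_filter.2 ⟨hs, h⟩, by simp⟩

theorem injOn_rankIn (hrem : ∀ x ∈ rem, x ∈ p) : Set.InjOn (rankIn p rem) rem := by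
  intro s hs t ht h
  rcases lt_trichotomy (p.idxOf s) (p.idxOf t) with hlt | heq | hgt
  · exact absurd h (rankIn_lt_rankIn hs hlt).ne
  · exact (List.idxOf_inj (hrem s hs)).1 heq
  · exact absurd h (rankIn_lt_rankIn ht hgt).ne'

theorem rankIn_erase_le (a s : I) : rankIn p (rem.erase a) s ≤ rankIn p rem s :=
  card_le_card (filter_subset_filter _ (erase_subset a rem))

theorem rankIn_erase_add_one {a s : I} (ha : a ∈ rem) (h : p.idxOf a < p.idxOf s) :
    rankIn p (rem.erase a) s + 1 = rankIn p rem s := by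
  rw [rankIn, rankIn, filter_erase, card_erase_add_one (mem_filter.2 ⟨ha, h⟩)]

theorem card_filter_rankIn_lt_succ_le (hrem : ∀ x ∈ rem, x ∈ p) (hS : S ⊆ rem) {a : I}
    (ha : a ∈ rem) (t : ℕ) :
    #(S.filter (rankIn p rem · < t + 1)) ≤
      #((S.erase a).filter (rankIn p (rem.erase a) · < t)) + 1 := by
  set T := S.filter (rankIn p rem · < t + 1)
  let kept (s : I) : Prop := s ≠ a ∧ rankIn p (rem.erase a) s < t
  have hkept : T.filter kept ⊆ (S.erase a).filter (rankIn p (rem.erase a) · < t) := fun s hs => by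
    simp only [mem_filter, mem_erase, T, kept] at hs ⊢
    exact ⟨⟨hs.2.1, hs.1.1⟩, hs.2.2⟩
  -- an item other than `a` can only drop out if it sits at place `t` and `a` ranks below it
  have hdrop : ∀ s ∈ T, ¬ kept s → s ≠ a → rankIn p rem s = t ∧ a ∉ T := by
    intro s hs hks hsa
    obtain ⟨hsS, hst⟩ := mem_filter.1 hs
    have hst' : t ≤ rankIn p (rem.erase a) s := not_lt.1 fun h => hks ⟨hsa, h⟩
    have hle := rankIn_erase_le (p := p) (rem := rem) a s
    have hsa' : p.idxOf s < p.idxOf a := by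
      refine idxOf_lt_idxOf_of_le (hrem s (hS hsS)) (not_lt.1 fun h => ?_) (Ne.symm hsa)
      have := rankIn_erase_add_one ha h
      omega
    have := rankIn_lt_rankIn (hS hsS) hsa'
    exact ⟨by omega, fun haT => by have := (mem_filter.1 haT).2; omega⟩
  have hdropped : #(T.filter fun s => ¬ kept s) ≤ 1 := by
    refine card_le_one.2 fun x hx y hy => ?_
    obtain ⟨hx, hkx⟩ := mem_filter.1 hx
    obtain ⟨hy, hky⟩ := mem_filter.1 hy
    by_cases hxa : x = a <;> by_cases hya : y = a
    · exact hxa.trans hya.symm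
    · exact absurd (hxa ▸ hx) (hdrop y hy hky hya).2
    · exact absurd (hya ▸ hy) (hdrop x hx hkx hxa).2
    · exact injOn_rankIn hrem (hS (mem_filter.1 hx).1) (hS (mem_filter.1 hy).1)
        ((hdrop x hx hkx hxa).1.trans (hdrop y hy hky hya).1.symm)
  have := card_filter_add_card_filter_not (s := T) kept
  have := card_le_card hkept
  omega

end Rank

section Feasible

variable {p2 : List I} {π : List (Fin 2)} {rem S T : Finset I}

/-- The Hall-type condition for securing `S` when the items `rem` are left and the turns `π` remain;
`rankIn p2 rem s < t` says that `s` is among agent 2's `t` favourite items of `rem`. -/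
def Feasible (p2 : List I) (π : List (Fin 2)) (rem S : Finset I) : Prop :=
  S ⊆ rem ∧ ∀ t, #(S.filter (rankIn p2 rem · < t)) ≤ (π.take t).count 0

theorem feasible_empty : Feasible p2 π rem ∅ :=
  ⟨empty_subset _, by simp⟩

theorem Feasible.eq_empty_of_nil (h : Feasible p2 [] rem S) : S = ∅ := by
  have h' := h.2 (#rem + 1)
  rw [filter_true_of_mem fun s _ => Nat.lt_succ_of_le (rankIn_le_card s)] at h'
  simpa using h'

theorem feasible_iff_forall_succ :
    Feasible p2 π rem S ↔
      S ⊆ rem ∧ ∀ t, #(S.filter (rankIn p2 rem · < t + 1)) ≤ (π.take (t + 1)).count 0 := by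
  refine and_congr_right fun _ => ⟨fun h t => h (t + 1), fun h t => ?_⟩
  cases t with
  | zero => simp
  | succ t => exact h t

theorem feasible_cons_iff_of_ne_zero {a : Fin 2} (ha : a ≠ 0) (hrem : ∀ x ∈ rem, x ∈ p2) {g : I}
    (hg : g ∈ rem) (hg_min : ∀ o ∈ rem, p2.idxOf g ≤ p2.idxOf o) :
    Feasible p2 (a :: π) rem S ↔ g ∉ S ∧ Feasible p2 π (rem.erase g) S := by
  have hcount (t : ℕ) : ((a :: π).take (t + 1)).count 0 = (π.take t).count 0 := by
    simp [ha]
  have hrank (t : ℕ) (hgS : g ∉ S) (hS : S ⊆ rem) :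
      S.filter (rankIn p2 rem · < t + 1) = S.filter (rankIn p2 (rem.erase g) · < t) := by
    refine filter_congr fun s hs => ?_
    have := rankIn_erase_add_one hg <| idxOf_lt_idxOf_of_le (hrem g hg) (hg_min s (hS hs))
      (ne_of_mem_of_not_mem hs hgS)
    omega
  rw [feasible_iff_forall_succ]
  constructor
  · rintro ⟨hS, h⟩
    have hgS : g ∉ S := fun hgS => by
      have hg0 : rankIn p2 rem g = 0 :=
        card_eq_zero.2 <| filter_eq_empty_iff.2 fun o ho => not_lt.2 (hg_min o ho)
      have : 0 < #(S.filter (rankIn p2 rem · < 0 + 1)) :=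
        card_pos.2 ⟨g, mem_filter.2 ⟨hgS, by omega⟩⟩
      have := h 0
      simp only [hcount, List.take_zero, List.count_nil] at this
      omega
    refine ⟨hgS, fun s hs => mem_erase.2 ⟨ne_of_mem_of_not_mem hs hgS, hS hs⟩, fun t => ?_⟩
    rw [← hrank t hgS hS, ← hcount]
    exact h t
  · rintro ⟨hgS, hS, h⟩
    have hS' := hS.trans (erase_subset g rem)
    exact ⟨hS', fun t => by rw [hrank t hgS hS', hcount]; exact h t⟩

theorem feasible_zero_cons_of_erase (hrem : ∀ x ∈ rem, x ∈ p2) {a : I} (ha : a ∈ rem)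
    (h : Feasible p2 π (rem.erase a) (S.erase a)) : Feasible p2 ((0 : Fin 2) :: π) rem S := by
  have hS : S ⊆ rem := fun s hs =>
    if hsa : s = a then hsa ▸ ha else mem_of_mem_erase (h.1 (mem_erase.2 ⟨hsa, hs⟩))
  refine feasible_iff_forall_succ.2 ⟨hS, fun t => ?_⟩
  have hcount : (((0 : Fin 2) :: π).take (t + 1)).count 0 = (π.take t).count 0 + 1 := by
    simp
  rw [hcount]
  exact (card_filter_rankIn_lt_succ_le hrem hS ha t).trans (Nat.add_le_add_right (h.2 t) 1)

theorem Feasible.erase_of_zero_cons (hrem : ∀ x ∈ rem, x ∈ p2)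
    (h : Feasible p2 ((0 : Fin 2) :: π) rem S) {a : I} (ha : a ∈ S)
    (ha_min : ∀ s ∈ S, p2.idxOf a ≤ p2.idxOf s) : Feasible p2 π (rem.erase a) (S.erase a) := by
  refine ⟨erase_subset_erase a h.1, fun t => ?_⟩
  have hlt : ∀ s ∈ S, s ≠ a → p2.idxOf a < p2.idxOf s := fun s hs hsa =>
    idxOf_lt_idxOf_of_le (hrem a (h.1 ha)) (ha_min s hs) hsa
  have hF : (S.erase a).filter (rankIn p2 (rem.erase a) · < t) =
      (S.filter (rankIn p2 rem · < t + 1)).erase a := by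
    rw [← filter_erase]
    refine filter_congr fun s hs => ?_
    have := rankIn_erase_add_one (h.1 ha) (hlt s (mem_of_mem_erase hs) (ne_of_mem_erase hs))
    omega
  have hcount := h.2 (t + 1)
  simp only [List.take_succ_cons, List.count_cons_self] at hcount
  rw [hF]
  by_cases haF : a ∈ S.filter (rankIn p2 rem · < t + 1)
  · rw [card_erase_of_mem haF]
    omega
  · -- `a` is agent 2's favourite item of `S`, so if it misses the top `t + 1`, all of `S` does
    rw [filter_eq_empty_iff.2 fun s hs hst => haF (mem_filter.2 ⟨ha, ?_⟩)]
    · simp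
    · rcases eq_or_ne s a with rfl | hsa
      · exact hst
      · exact (rankIn_lt_rankIn (h.1 ha) (hlt s hs hsa)).trans hst

theorem Feasible.exists_insert (hS : Feasible p2 π rem S) (hT : Feasible p2 π rem T)
    (hlt : #S < #T) : ∃ x ∈ T, x ∉ S ∧ Feasible p2 π rem (insert x S) := by
  obtain ⟨x, hx, hx_max⟩ := (T \ S).exists_max_image (rankIn p2 rem)
    (sdiff_nonempty.2 fun h => (card_le_card h).not_gt hlt)
  obtain ⟨hxT, hxS⟩ := mem_sdiff.1 hx
  refine ⟨x, hxT, hxS, insert_subset (hT.1 hxT) hS.1, fun t => ?_⟩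
  rw [filter_insert]
  split_ifs with hxt
  · -- all of `T \ S` lies in the top `t`, so if `S` used up its budget there, `#T ≤ #S`
    refine (card_insert_le _ _).trans (Nat.succ_le_of_lt ((hS.2 t).lt_of_ne fun heq => ?_))
    have hT_top : T \ S ∪ (S ∩ T).filter (rankIn p2 rem · < t) ⊆ T.filter (rankIn p2 rem · < t) :=
      union_subset (fun y hy => mem_filter.2 ⟨(mem_sdiff.1 hy).1, (hx_max y hy).trans_lt hxt⟩)
        (filter_subset_filter _ inter_subset_right)
    have hS_top : S.filter (rankIn p2 rem · < t) ⊆ S \ T ∪ (S ∩ T).filter (rankIn p2 rem · < t) :=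
      fun y hy => by
        obtain ⟨hyS, hyt⟩ := mem_filter.1 hy
        by_cases hyT : y ∈ T
        · exact mem_union_right _ (mem_filter.2 ⟨mem_inter.2 ⟨hyS, hyT⟩, hyt⟩)
        · exact mem_union_left _ (mem_sdiff.2 ⟨hyS, hyT⟩)
    have hdisj : Disjoint (T \ S) ((S ∩ T).filter (rankIn p2 rem · < t)) :=
      disjoint_left.2 fun y hy hy' => (mem_sdiff.1 hy).2 (mem_inter.1 (mem_filter.1 hy').1).1
    have h1 := (card_le_card hT_top).trans (hT.2 t)
    have h2 := (card_le_card hS_top).trans (card_union_le _ _)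
    rw [card_union_of_disjoint hdisj] at h1
    have h3 := card_sdiff_add_card_inter T S
    have h4 := card_sdiff_add_card_inter S T
    rw [inter_comm] at h3
    omega
  · exact hS.2 t

end Feasible

section Allocation

variable {O : Finset I} {p p1 p1' p2 : List I} {π : List (Fin 2)} {rem S T : Finset I}

theorem IsReport.mem (hp : IsReport O p) {x : I} (hx : x ∈ O) : x ∈ p := (hp.2 x).2 hx

theorem IsReport.cons_filter (hp : IsReport O p) {o : I} (ho : o ∈ O) :
    IsReport O (o :: p.filter (· ≠ o)) := by
  refine ⟨List.nodup_cons.2 ⟨by simp, hp.1.filter _⟩, fun x => ?_⟩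
  by_cases hx : x = o
  · simp [hx, ho]
  · simp [hx, hp.2]

theorem alloc2_cons (a : Fin 2) :
    alloc2 p1 p2 (a :: π) rem =
      match (if a = 0 then p1 else p2).find? (fun o => decide (o ∈ rem)) with
      | none => alloc2 p1 p2 π rem
      | some o => fun j =>
          if j = a then insert o (alloc2 p1 p2 π (rem.erase o) j)
          else alloc2 p1 p2 π (rem.erase o) j :=
  rfl

theorem alloc2_zero_cons {o : I} (ho : p1.find? (fun x => decide (x ∈ rem)) = some o) :
    alloc2 p1 p2 ((0 : Fin 2) :: π) rem 0 = insert o (alloc2 p1 p2 π (rem.erase o) 0) := by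
  simp [alloc2_cons, ho]

theorem alloc2_cons_of_ne_zero {a : Fin 2} (ha : a ≠ 0) {g : I}
    (hg : p2.find? (fun x => decide (x ∈ rem)) = some g) :
    alloc2 p1 p2 (a :: π) rem 0 = alloc2 p1 p2 π (rem.erase g) 0 := by
  simp [alloc2_cons, ha, hg, Ne.symm ha]

theorem alloc2_subset {j : Fin 2} : alloc2 p1 p2 π rem j ⊆ rem := by
  induction π generalizing rem with
  | nil => exact empty_subset _
  | cons a π ih =>
    rw [alloc2_cons]
    split
    · exact ih
    · next o ho =>
      have hor : o ∈ rem := by simpa using List.find?_some ho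
      dsimp only
      split_ifs
      · exact insert_subset hor (ih.trans (erase_subset o rem))
      · exact ih.trans (erase_subset o rem)

theorem alloc2_congr_left
    (h : ∀ T ⊆ rem, p1.find? (fun o => decide (o ∈ T)) = p1'.find? (fun o => decide (o ∈ T))) :
    alloc2 p1 p2 π rem = alloc2 p1' p2 π rem := by
  induction π generalizing rem with
  | nil => rfl
  | cons a π ih =>
    have hfind : (if a = 0 then p1 else p2).find? (fun o => decide (o ∈ rem)) =
        (if a = 0 then p1' else p2).find? (fun o => decide (o ∈ rem)) := by
      split_ifs
      exacts [h rem subset_rfl, rfl]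
    rw [alloc2_cons, alloc2_cons, hfind]
    split
    · exact ih h
    · rw [ih fun T hT => h T (hT.trans (erase_subset _ _))]

theorem feasible_of_subset_alloc2 (hp1 : IsReport O p1) (hp2 : IsReport O p2) (hrem : rem ⊆ O)
    (h : S ⊆ alloc2 p1 p2 π rem 0) : Feasible p2 π rem S := by
  induction π generalizing rem S with
  | nil => exact (subset_empty.1 h) ▸ feasible_empty
  | cons a π ih =>
    obtain rfl | hSne := S.eq_empty_or_nonempty
    · exact feasible_empty
    have hrem_ne : rem.Nonempty := hSne.mono (h.trans alloc2_subset)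
    have hrem' (o : I) : rem.erase o ⊆ O := (erase_subset o rem).trans hrem
    by_cases ha : a = 0
    · subst ha
      obtain ⟨o, ho⟩ := exists_find?_eq_some (fun x hx => hp1.mem (hrem hx)) hrem_ne
      rw [alloc2_zero_cons ho, subset_insert_iff] at h
      exact feasible_zero_cons_of_erase (fun x hx => hp2.mem (hrem hx))
        (by simpa using List.find?_some ho) (ih (hrem' o) h)
    · obtain ⟨g, hg⟩ := exists_find?_eq_some (fun x hx => hp2.mem (hrem hx)) hrem_ne
      rw [alloc2_cons_of_ne_zero ha hg] at h
      refine (feasible_cons_iff_of_ne_zero ha (fun x hx => hp2.mem (hrem hx))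
        (by simpa using List.find?_some hg) fun o => idxOf_le_of_find?_eq_some hg).2
        ⟨fun hgS => ?_, ih (hrem' g) h⟩
      exact (mem_erase.1 (alloc2_subset (h hgS))).1 rfl

theorem exists_report_of_feasible (hp2 : IsReport O p2) (hrem : rem ⊆ O)
    (h : Feasible p2 π rem S) : ∃ p1, IsReport O p1 ∧ S ⊆ alloc2 p1 p2 π rem 0 := by
  induction π generalizing rem S with
  | nil => exact ⟨p2, hp2, h.eq_empty_of_nil ▸ empty_subset _⟩
  | cons a π ih =>
    obtain rfl | hSne := S.eq_empty_or_nonempty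
    · exact ⟨p2, hp2, empty_subset _⟩
    have hrem_p2 : ∀ x ∈ rem, x ∈ p2 := fun x hx => hp2.mem (hrem hx)
    have hrem' (o : I) : rem.erase o ⊆ O := (erase_subset o rem).trans hrem
    by_cases ha : a = 0
    · subst ha
      -- agent 1 first takes agent 2's favourite item of `S`
      obtain ⟨o, ho, ho_min⟩ := S.exists_min_image p2.idxOf hSne
      obtain ⟨p1, hp1, hsub⟩ := ih (hrem' o) (h.erase_of_zero_cons hrem_p2 ho ho_min)
      have hor : o ∈ rem := h.1 ho
      refine ⟨o :: p1.filter (· ≠ o), hp1.cons_filter (hrem hor), ?_⟩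
      rw [alloc2_zero_cons (List.find?_cons_of_pos (by simpa using hor)), subset_insert_iff]
      refine (alloc2_congr_left fun T hT => ?_ : alloc2 _ p2 π (rem.erase o) = _) ▸ hsub
      have hoT : o ∉ T := fun hoT => (mem_erase.1 (hT hoT)).1 rfl
      rw [List.find?_cons_of_neg (by simpa using hoT), List.find?_filter]
      congr 1
      funext x
      by_cases hx : x = o <;> simp [hx, hoT]
    · obtain ⟨g, hg⟩ := exists_find?_eq_some hrem_p2 (hSne.mono h.1)
      obtain ⟨-, hfeas⟩ := (feasible_cons_iff_of_ne_zero ha hrem_p2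
        (by simpa using List.find?_some hg) fun o => idxOf_le_of_find?_eq_some hg).1 h
      obtain ⟨p1, hp1, hsub⟩ := ih (hrem' g) hfeas
      exact ⟨p1, hp1, by rwa [alloc2_cons_of_ne_zero ha hg]⟩

theorem achievable_iff_feasible (hp2 : IsReport O p2) :
    Achievable p2 π O S ↔ Feasible p2 π O S :=
  ⟨fun ⟨_, hp1, h⟩ => feasible_of_subset_alloc2 hp1 hp2 subset_rfl h,
    exists_report_of_feasible hp2 subset_rfl⟩

theorem Achievable.subset (h : Achievable p2 π O S) : S ⊆ O :=
  let ⟨_, _, hS⟩ := h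
  hS.trans alloc2_subset

theorem Achievable.mono (h : Achievable p2 π O S) (hTS : T ⊆ S) : Achievable p2 π O T :=
  let ⟨p1, hp1, hS⟩ := h
  ⟨p1, hp1, hTS.trans hS⟩

theorem Achievable.exists_insert (hp2 : IsReport O p2) (hS : Achievable p2 π O S)
    (hT : Achievable p2 π O T) (hlt : #S < #T) :
    ∃ x ∈ T, x ∉ S ∧ Achievable p2 π O (insert x S) := by
  simp only [achievable_iff_feasible hp2] at hS hT ⊢
  exact hS.exists_insert hT hlt

end Allocation

theorem Consistent.le_of_idxOf_le {O : Finset I} {p : List I} {u : I → ℝ}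
    (hu : Consistent O p u) (hp : IsReport O p) {a b : I} (ha : a ∈ O) (hb : b ∈ O)
    (h : p.idxOf a ≤ p.idxOf b) : u b ≤ u a := by
  rcases h.lt_or_eq with h | h
  · exact ((hu.2 a ha b hb).2 h).le
  · rw [(List.idxOf_inj (hp.mem ha)).1 h]

end SequentialAllocation

theorem statement5_general {I : Type*} [DecidableEq I]
    (O : Finset I) (π : List (Fin 2))
    (p2 : List I) (hp2 : IsReport O p2)
    (p1 : List I) (hp1 : IsReport O p1)  -- agent 1's true preference ≻₁
    :
    ∀ u : I → ℝ, Consistent O p1 u →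
      ∀ B : Finset I, Achievable p2 π O B → B.card = π.count 0 →
        ∑ o ∈ B, u o ≤ ∑ o ∈ greedy (Achievable p2 π O) p1 ∅, u o := by
  intro u hu B hB _
  have hG : Achievable p2 π O (greedy (Achievable p2 π O) p1 ∅) :=
    greedy_spec _ (hB.mono (Finset.empty_subset B))
  refine sum_le_sum_of_card_filter_le p1.idxOf (fun g hg => (hu.1 g (hG.subset hg)).le)
    (fun g hg b hb => hu.le_of_idxOf_le hp1 (hG.subset hg) (hB.subset hb)) fun n => ?_
  exact card_filter_le_card_filter_greedy (fun _ _ hTS hS => hS.mono hTS)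
    (fun _ _ hS hT hlt => hS.exists_insert hp2 hT hlt) hp1.1 hB
    (fun b hb => hp1.mem (hB.subset hb)) n

/-- Let `S*` be the greedy set (enumerate `O` as
`o₁ ≻₁ ⋯ ≻₁ o_m`, i.e. the true ranking list `p1`, adding `o_j` whenever the
current set together with `o_j` is achievable).  Then for EVERY additive utility
`u` consistent with ≻₁ and every achievable `B` with `|B| = k₁` (the number of
turns of agent 1 in `π`), `u(S*) ≥ u(B)`: `S*` simultaneously maximizes all
consistent additive utilities over achievable allocations. -/
theorem statement5 {I : Type*} [DecidableEq I]
    (O : Finset I) (π : List (Fin 2)) (hπ : π.length = O.card)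
    (p2 : List I) (hp2 : IsReport O p2)
    (p1 : List I) (hp1 : IsReport O p1)  -- agent 1's true preference ≻₁
    :
    ∀ u : I → ℝ, Consistent O p1 u →
      ∀ B : Finset I, Achievable p2 π O B → B.card = π.count 0 →
        ∑ o ∈ B, u o ≤ ∑ o ∈ greedy (Achievable p2 π O) p1 ∅, u o :=
  statement5_general O π p2 hp2 p1 hp1
end

section
/- In the fixed 3-agent instance: (1) under the truthful report a ≻ b ≻ c ≻ d, agent 1's allocation is {a, d}; (2) under the report c ≻ b ≻ a ≻ d, agent 1's allocation is {b, c}; (3) there is no report of agent 1 under which agent 1's allocation contains both a and b; (4) there is no report of agent 1 under which agent 1's allocation contains both a and c. -/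
/-- Three-agent sequential allocation: agents `0, 1, 2` ("agents 1, 2, 3")
report the ranking lists `p1, p2, p3` respectively. -/
def alloc3 {I : Type*} [DecidableEq I] (p1 p2 p3 : List I)
    (π : List (Fin 3)) (O : Finset I) : Fin 3 → Finset I :=
  seqAlloc (fun ag => if ag = 0 then p1 else if ag = 1 then p2 else p3) π O

namespace FixedInstance

/-- Item `a`. -/
def a : Fin 4 := 0
/-- Item `b`. -/
def b : Fin 4 := 1
/-- Item `c`. -/
def c : Fin 4 := 2
/-- Item `d`. -/
def d : Fin 4 := 3

/-- Agent 1's true preference: `a ≻₁ b ≻₁ c ≻₁ d`. -/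
def pref1 : List (Fin 4) := [a, b, c, d]

/-- Agent 2's (truthful) report: `c ≻₂ d ≻₂ a ≻₂ b`. -/
def pref2 : List (Fin 4) := [c, d, a, b]

/-- Agent 3's (truthful) report: `a ≻₃ b ≻₃ c ≻₃ d`. -/
def pref3 : List (Fin 4) := [a, b, c, d]

/-- The picking sequence `1, 2, 3, 1`. -/
def pick : List (Fin 3) := [0, 1, 2, 0]

/-- The item set `O = {a, b, c, d}`. -/
def items : Finset (Fin 4) := Finset.univ

end FixedInstance

def afterPick {I : Type*} [DecidableEq I] (p : List I) (rem : Finset I) : Finset I :=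
  match p.find? (fun o => decide (o ∈ rem)) with
  | none => rem
  | some o => rem.erase o

section SeqAlloc

variable {A I : Type*} [DecidableEq A] [DecidableEq I] (prefs : A → List I)

theorem seqAlloc_subset (π : List A) (rem : Finset I) (j : A) :
    seqAlloc prefs π rem j ⊆ rem := by
  induction π generalizing rem with
  | nil => simp [seqAlloc]
  | cons i π ih =>
    rcases ho : (prefs i).find? (fun o => decide (o ∈ rem)) with _ | o
    · simpa only [seqAlloc, ho] using ih rem
    · simp only [seqAlloc, ho]
      have ho_mem : o ∈ rem := by simpa using List.find?_some ho
      have hsub := (ih (rem.erase o)).trans (Finset.erase_subset o rem)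
      split_ifs
      · exact Finset.insert_subset ho_mem hsub
      · exact hsub

theorem seqAlloc_cons_of_ne {i j : A} (h : j ≠ i) (π : List A) (rem : Finset I) :
    seqAlloc prefs (i :: π) rem j = seqAlloc prefs π (afterPick (prefs i) rem) j := by
  rcases ho : (prefs i).find? (fun o => decide (o ∈ rem)) with _ | o <;>
    simp [seqAlloc, afterPick, ho, h]

theorem seqAlloc_cons_self_of_find?_eq_some {i : A} {o : I} {rem : Finset I}
    (h : (prefs i).find? (fun o => decide (o ∈ rem)) = some o) (π : List A) :
    seqAlloc prefs (i :: π) rem i = insert o (seqAlloc prefs π (rem.erase o) i) := by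
  simp [seqAlloc, h]

end SeqAlloc

namespace FixedInstance

theorem alloc3_pick_subset (x : Fin 4) (rest : List (Fin 4)) :
    alloc3 (x :: rest) pref2 pref3 pick items 0 ⊆
      insert x (afterPick pref3 (afterPick pref2 (items.erase x))) := by
  set prefs : Fin 3 → List (Fin 4) := fun ag =>
    if ag = 0 then x :: rest else if ag = 1 then pref2 else pref3
  have hfirst : (prefs 0).find? (fun o => decide (o ∈ items)) = some x := by
    simp [prefs, items]
  rw [alloc3, pick, seqAlloc_cons_self_of_find?_eq_some prefs hfirst,
    seqAlloc_cons_of_ne prefs (by decide), seqAlloc_cons_of_ne prefs (by decide)]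
  exact Finset.insert_subset_insert x (seqAlloc_subset _ _ _ _)

/-- Agent 3 takes `a` unless agent 1 takes it first, and then agent 1's second item is `d`. -/
theorem alloc3_subset_of_a_mem {p1 : List (Fin 4)} (hp1 : IsReport items p1)
    (ha : a ∈ alloc3 p1 pref2 pref3 pick items 0) :
    alloc3 p1 pref2 pref3 pick items 0 ⊆ {a, d} := by
  obtain ⟨x, rest, rfl⟩ : ∃ x rest, p1 = x :: rest :=
    List.exists_cons_of_ne_nil (List.ne_nil_of_mem ((hp1.2 a).2 (Finset.mem_univ a)))
  have hleft : ∀ y : Fin 4, a ∈ insert y (afterPick pref3 (afterPick pref2 (items.erase y))) →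
      insert y (afterPick pref3 (afterPick pref2 (items.erase y))) = {a, d} := by
    decide
  have hsub := alloc3_pick_subset x rest
  exact hleft x (hsub ha) ▸ hsub

end FixedInstance

open FixedInstance in
/-- In the fixed 3-agent instance (picking sequence `1,2,3,1`;
agent 2 reports `c ≻ d ≻ a ≻ b`; agent 3 reports `a ≻ b ≻ c ≻ d`):
(1) under the truthful report `a ≻ b ≻ c ≻ d`, agent 1's allocation is `{a, d}`;
(2) under the report `c ≻ b ≻ a ≻ d`, agent 1's allocation is `{b, c}`;
(3) no report of agent 1 gives agent 1 both `a` and `b`;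
(4) no report of agent 1 gives agent 1 both `a` and `c`. -/
theorem statement8 :
    alloc3 [a, b, c, d] pref2 pref3 pick items 0 = {a, d} ∧
    alloc3 [c, b, a, d] pref2 pref3 pick items 0 = {b, c} ∧
    (¬ ∃ p1 : List (Fin 4), IsReport items p1 ∧
        {a, b} ⊆ alloc3 p1 pref2 pref3 pick items 0) ∧
    (¬ ∃ p1 : List (Fin 4), IsReport items p1 ∧
        {a, c} ⊆ alloc3 p1 pref2 pref3 pick items 0) := by
  refine ⟨by decide, by decide, ?_, ?_⟩
  · rintro ⟨p1, hp1, hab⟩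
    have hb : b ∈ ({a, d} : Finset (Fin 4)) :=
      alloc3_subset_of_a_mem hp1 (hab (by simp)) (hab (by simp))
    exact absurd hb (by decide)
  · rintro ⟨p1, hp1, hac⟩
    have hc : c ∈ ({a, d} : Finset (Fin 4)) :=
      alloc3_subset_of_a_mem hp1 (hac (by simp)) (hac (by simp))
    exact absurd hc (by decide)
end
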